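/- For every a ∈ ℂ^m, conj(C(a)) + C(conj(a)) = 0, where conj(a) := (conj(a₁), …, conj(a_m)). -/

import Mathlib

open Complex Filter Real

noncomputable section

/-- The point `r e^{iθ}` in the complex plane. -/
def rayPt (r θ : ℝ) : ℂ := (r : ℂ) * Complex.exp (θ * Complex.I)

/-- The branch `X^s := exp(s(log r + iθ))` for `X = r e^{iθ}`. -/
def rayPow (r θ : ℝ) (s : ℂ) : ℂ := Complex.exp (s * ((Real.log r : ℂ) + θ * Complex.I))

/-- `ω := exp(2πi/(m+2))`. -/
def om (m : ℕ) : ℂ := Complex.exp (2 * Real.pi * Complex.I / (m + 2))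

/-- `ω^s := exp((2πi/(m+2)) s)`. -/
def omPow (m : ℕ) (s : ℂ) : ℂ := Complex.exp ((2 * Real.pi * Complex.I / (m + 2)) * s)

/-- The coefficients `b_n(a)` of the formal square root of `1 + a₁ x + ⋯ + a_m x^m`:
`b₀ = 1`, `b_n = (1/2)(a_n - ∑_{i=1}^{n-1} b_i b_{n-i})` (with `a_k = 0` for `k > m`). -/
def bcoef (m : ℕ) (a : Fin m → ℂ) : ℕ → ℂ
  | 0 => 1
  | n + 1 => (1 / 2) * ((if h : n < m then a ⟨n, h⟩ else 0) -
      ∑ i ∈ (Finset.Ico 1 (n + 1)).attach,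
        bcoef m a i.1 * bcoef m a (n + 1 - i.1))
decreasing_by
  all_goals
    have h1 := (Finset.mem_Ico.mp i.2).1
    have h2 := (Finset.mem_Ico.mp i.2).2
    omega

/-- `r_m(a) := -m/4` for odd `m`, `-m/4 - b_{1+m/2}(a)` for even `m`. -/
def rmC (m : ℕ) (a : Fin m → ℂ) : ℂ :=
  if m % 2 = 1 then -(m : ℂ) / 4 else -(m : ℂ) / 4 - bcoef m a (1 + m / 2)

/-- `S(X, a) = ∑_{k=0}^{⌊(m+1)/2⌋} (2 b_k(a)/(m+2-2k)) X^{(m+2-2k)/2}` at `X = r e^{iθ}`. -/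
def Sfun (m : ℕ) (a : Fin m → ℂ) (r θ : ℝ) : ℂ :=
  ∑ k ∈ Finset.range ((m + 1) / 2 + 1),
    (2 * bcoef m a k / ((m : ℂ) + 2 - 2 * (k : ℂ))) * rayPow r θ (((m : ℂ) + 2 - 2 * (k : ℂ)) / 2)

/-- The potential `X^m + a₁ X^{m-1} + ⋯ + a_m`. -/
def pot (m : ℕ) (a : Fin m → ℂ) (X : ℂ) : ℂ :=
  X ^ m + ∑ k : Fin m, a k * X ^ (m - 1 - (k : ℕ))

/-- `ω_k(a) := (ω^k a₁, ω^{2k} a₂, …, ω^{km} a_m)`. -/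
def omAct (m : ℕ) (k : ℤ) (a : Fin m → ℂ) : Fin m → ℂ :=
  fun j => om m ^ (k * (((j : ℕ) : ℤ) + 1)) * a j

/-- Sibuya's asymptotic characterization of the canonical solution of
`-Φ'' + (X^m + a₁X^{m-1} + ⋯ + a_m)Φ = 0`:
`Φ(re^{iθ}) (re^{iθ})^{-r_m(a)} e^{S(re^{iθ},a)} → 1` for every `|θ| < 3π/(m+2)`. -/
def SibAsymp (m : ℕ) (a : Fin m → ℂ) (Φ : ℂ → ℂ) : Prop :=
  ∀ θ : ℝ, |θ| < 3 * Real.pi / (m + 2) →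
    Filter.Tendsto
      (fun r : ℝ => Φ (rayPt r θ) * rayPow r θ (-(rmC m a)) * Complex.exp (Sfun m a r θ))
      Filter.atTop (nhds 1)

/-!
Conjugating the connection formula taken at `conj a` and `conj X` exchanges the roles of `Φ₁` and
`Φ₋₁` (since `conj ω = ω⁻¹`), provided the canonical solution is real in the sense
`conj Φ₀(X, a) = Φ₀(conj X, conj a)`. Adding it to the formula at `a` and `X` leaves
`(C(a) + conj C(conj a)) Φ₀(X, a) = 0`, and `Φ₀(·, a)` does not vanish identically.

The reality of `Φ₀` is a uniqueness statement: both sides solve `(★a)` and behave like `e^{-E(t)}`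
on the positive real axis, `E(t) = -r_m(a) log t + S(t, a)`. For two such solutions `F`, `G` the
Wronskian `W` is constant and `(G/F)' = W / F² ≈ W e^{2E}`. Now `Re E(t)` grows like
`(2/(m+2)) t^{(m+2)/2}` while the phase of `e^{2E}` only turns at rate `E' = O(t^{m/2})`, so over
`[t, t + c t^{-m/2}]` the ratio `G/F` would move by about `‖W‖ e^{2 Re E(t)} t^{-m/2} → ∞`,
contradicting `G/F → 1` unless `W = 0`. Then `G/F` is constant on the ray, and `F = G` by the
identity theorem.
-/

open ComplexConjugate Asymptotics Set Topology

theorem Real.isLittleO_rpow_rpow_atTop {a b : ℝ} (hab : a < b) :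
    (fun t : ℝ => t ^ a) =o[atTop] fun t => t ^ b := by
  refine (isLittleO_iff_tendsto' ?_).mpr ?_
  · filter_upwards [eventually_gt_atTop 0] with t ht h
    exact absurd h (Real.rpow_pos_of_pos ht b).ne'
  · refine (tendsto_rpow_neg_atTop (sub_pos.mpr hab)).congr' ?_
    filter_upwards [eventually_gt_atTop 0] with t ht
    rw [← Real.rpow_sub ht, neg_sub]

theorem Real.isBigO_rpow_rpow_atTop {a b : ℝ} (hab : a ≤ b) :
    (fun t : ℝ => t ^ a) =O[atTop] fun t => t ^ b := by
  refine IsBigO.of_bound 1 ?_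
  filter_upwards [eventually_ge_atTop 1] with t ht
  rw [one_mul, Real.norm_of_nonneg (by positivity), Real.norm_of_nonneg (by positivity)]
  exact Real.rpow_le_rpow_of_exponent_le ht hab

theorem half_norm_mul_sub_le_norm_image_sub {F : Type*} [NormedAddCommGroup F] [NormedSpace ℝ F]
    {u u' : ℝ → F} {L : F} {a b : ℝ} (hab : a ≤ b)
    (hu : ∀ s ∈ Icc a b, HasDerivWithinAt u (u' s) (Icc a b) s)
    (hL : ∀ s ∈ Icc a b, ‖u' s - L‖ ≤ ‖L‖ / 2) :
    ‖L‖ / 2 * (b - a) ≤ ‖u b - u a‖ := by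
  have hv : ∀ s ∈ Icc a b,
      HasDerivWithinAt (fun s => u s - s • L) (u' s - L) (Icc a b) s := fun s hs => by
    simpa using (hu s hs).fun_sub ((hasDerivWithinAt_id s _).smul_const L)
  have key : ‖(u b - u a) - (b - a) • L‖ ≤ ‖L‖ / 2 * (b - a) := by
    have := (convex_Icc a b).norm_image_sub_le_of_norm_hasDerivWithin_le hv hL
      (left_mem_Icc.mpr hab) (right_mem_Icc.mpr hab)
    rw [sub_smul, sub_sub_sub_comm]
    rwa [Real.norm_of_nonneg (sub_nonneg.mpr hab)] at this
  have htri := norm_sub_norm_le ((b - a) • L) (u b - u a)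
  rw [norm_smul, Real.norm_of_nonneg (sub_nonneg.mpr hab), norm_sub_rev ((b - a) • L)] at htri
  linarith

theorem exists_pos_eventually_norm_image_sub_le {F : Type*} [NormedAddCommGroup F]
    [NormedSpace ℝ F] {E E' : ℝ → F} {p ε : ℝ} (hp : 0 ≤ p) (hε : 0 < ε)
    (hE : ∀ᶠ s in atTop, HasDerivAt E (E' s) s) (hE' : E' =O[atTop] fun s => s ^ p) :
    ∃ c > 0, ∀ᶠ t in atTop, ∀ s ∈ Icc t (t + c * t ^ (-p)), ‖E s - E t‖ ≤ ε := by
  obtain ⟨K, hK, hKE⟩ := hE'.exists_pos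
  set M := K * 2 ^ p
  have hM : 0 < M := by positivity
  set c := min 1 (ε / M)
  refine ⟨c, by positivity, ?_⟩
  obtain ⟨T, hT⟩ := eventually_atTop.mp (hE.and hKE.bound)
  filter_upwards [eventually_ge_atTop T, eventually_ge_atTop 1] with t htT ht1 s hs
  have ht0 : 0 < t := by linarith
  have hδ : c * t ^ (-p) ≤ 1 :=
    mul_le_one₀ (min_le_left _ _) (by positivity)
      (Real.rpow_le_one_of_one_le_of_nonpos ht1 (neg_nonpos.mpr hp))
  have hsub : Icc t s ⊆ Icc t (t + c * t ^ (-p)) := Icc_subset_Icc_right hs.2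
  have hderiv : ∀ x ∈ Icc t s, HasDerivWithinAt E (E' x) (Icc t s) x := fun x hx =>
    (hT x (htT.trans hx.1)).1.hasDerivWithinAt
  have hbound : ∀ x ∈ Icc t s, ‖E' x‖ ≤ M * t ^ p := fun x hx => by
    have hx := hsub hx
    calc ‖E' x‖ ≤ K * ‖x ^ p‖ := (hT x (htT.trans hx.1)).2
      _ = K * x ^ p := by rw [Real.norm_of_nonneg (by positivity [ht0.trans_le hx.1])]
      _ ≤ K * (2 * t) ^ p := by gcongr <;> linarith [hx.1, hx.2]
      _ = M * t ^ p := by rw [Real.mul_rpow zero_le_two ht0.le]; ring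
  have hmvt := (convex_Icc t s).norm_image_sub_le_of_norm_hasDerivWithin_le hderiv hbound
    (left_mem_Icc.mpr hs.1) (right_mem_Icc.mpr hs.1)
  calc ‖E s - E t‖ ≤ M * t ^ p * ‖s - t‖ := hmvt
    _ ≤ M * t ^ p * (c * t ^ (-p)) := by
        rw [Real.norm_of_nonneg (sub_nonneg.mpr hs.1)]; gcongr; linarith [hs.2]
    _ = M * c := by rw [Real.rpow_neg ht0.le]; field_simp
    _ ≤ M * (ε / M) := by gcongr; exact min_le_right _ _
    _ = ε := by field_simp

theorem norm_exp_two_mul_mul_sub_one_le {z w : ℂ} (hz : ‖z‖ ≤ 1 / 16) (hw : ‖w - 1‖ ≤ 1 / 8) :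
    ‖exp (2 * z) * w - 1‖ ≤ 1 / 2 := by
  have h2z : ‖2 * z‖ ≤ 1 / 8 := by rw [norm_mul, Complex.norm_two]; linarith
  have hexp : ‖exp (2 * z) - 1‖ ≤ 1 / 4 := by
    linarith [Complex.norm_exp_sub_one_le (h2z.trans (by norm_num))]
  have hwn : ‖w‖ ≤ 9 / 8 := by
    linarith [norm_le_norm_sub_add w 1, norm_one (α := ℂ)]
  calc ‖exp (2 * z) * w - 1‖ = ‖(exp (2 * z) - 1) * w + (w - 1)‖ := by ring_nf
    _ ≤ ‖exp (2 * z) - 1‖ * ‖w‖ + ‖w - 1‖ := by rw [← norm_mul]; exact norm_add_le _ _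
    _ ≤ 1 / 4 * (9 / 8) + 1 / 8 := by gcongr
    _ ≤ 1 / 2 := by norm_num

theorem eq_zero_of_tendsto_of_hasDerivAt_mul_exp {u E E' ψ : ℝ → ℂ} {l W : ℂ} {p : ℝ}
    (hp : 0 ≤ p) (hu_lim : Tendsto u atTop (𝓝 l))
    (hu : ∀ᶠ s in atTop, HasDerivAt u (W * exp (2 * E s) * ψ s) s)
    (hψ : Tendsto ψ atTop (𝓝 1))
    (hE : ∀ᶠ s in atTop, HasDerivAt E (E' s) s) (hE' : E' =O[atTop] fun s => s ^ p)
    (hgrow : Tendsto (fun t => Real.exp (2 * (E t).re) * t ^ (-p)) atTop atTop) :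
    W = 0 := by
  by_contra hW
  obtain ⟨c, hc, hEloc⟩ :=
    exists_pos_eventually_norm_image_sub_le hp (by norm_num : (0 : ℝ) < 1 / 16) hE hE'
  set δ : ℝ → ℝ := fun t => c * t ^ (-p)
  have hψ' : ∀ᶠ s in atTop, ‖ψ s - 1‖ ≤ 1 / 8 :=
    (tendsto_iff_norm_sub_tendsto_zero.mp hψ).eventually (ge_mem_nhds (by norm_num))
  obtain ⟨T, hT⟩ := eventually_atTop.mp (hu.and hψ')
  have hjump : ∀ᶠ t in atTop,
      ‖W‖ / 2 * c * (Real.exp (2 * (E t).re) * t ^ (-p)) ≤ ‖u (t + δ t) - u t‖ := by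
    filter_upwards [hEloc, eventually_ge_atTop T, eventually_gt_atTop 0] with t hEt htT ht0
    set L := W * exp (2 * E t)
    have hδ : 0 ≤ δ t := by positivity
    have hderiv : ∀ s ∈ Icc t (t + δ t),
        HasDerivWithinAt u (W * exp (2 * E s) * ψ s) (Icc t (t + δ t)) s := fun s hs =>
      (hT s (htT.trans hs.1)).1.hasDerivWithinAt
    have hclose : ∀ s ∈ Icc t (t + δ t), ‖W * exp (2 * E s) * ψ s - L‖ ≤ ‖L‖ / 2 := by
      intro s hs
      have hfactor : W * exp (2 * E s) * ψ s - L = L * (exp (2 * (E s - E t)) * ψ s - 1) := by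
        rw [mul_sub (2 : ℂ), Complex.exp_sub]
        field_simp
        ring
      rw [hfactor, norm_mul]
      have := norm_exp_two_mul_mul_sub_one_le (hEt s hs) (hT s (htT.trans hs.1)).2
      nlinarith [norm_nonneg L]
    have hL : ‖L‖ = ‖W‖ * Real.exp (2 * (E t).re) := by
      simp [L, Complex.norm_exp]
    calc ‖W‖ / 2 * c * (Real.exp (2 * (E t).re) * t ^ (-p)) = ‖L‖ / 2 * (t + δ t - t) := by
          rw [hL, add_sub_cancel_left]; ring
      _ ≤ ‖u (t + δ t) - u t‖ :=
          half_norm_mul_sub_le_norm_image_sub (le_add_of_nonneg_right hδ) hderiv hclose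
  have hsmall : Tendsto (fun t => u (t + δ t) - u t) atTop (𝓝 0) := by
    have hshift : Tendsto (fun t => t + δ t) atTop atTop := by
      refine tendsto_atTop_mono' atTop ?_ tendsto_id
      filter_upwards [eventually_gt_atTop 0] with t ht
      exact le_add_of_nonneg_right (by positivity)
    simpa using (hu_lim.comp hshift).sub hu_lim
  have hbig : Tendsto (fun t => ‖W‖ / 2 * c * (Real.exp (2 * (E t).re) * t ^ (-p))) atTop atTop :=
    hgrow.const_mul_atTop (by positivity [norm_pos_iff.mpr hW])
  exact not_tendsto_atTop_of_tendsto_nhds hsmall.norm (tendsto_atTop_mono' atTop hjump hbig)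

theorem wronskian_eq_of_deriv_deriv_eq {V F G : ℂ → ℂ} (hF : Differentiable ℂ F)
    (hG : Differentiable ℂ G) (hFode : ∀ z, deriv (deriv F) z = V z * F z)
    (hGode : ∀ z, deriv (deriv G) z = V z * G z) (z w : ℂ) :
    F z * deriv G z - deriv F z * G z = F w * deriv G w - deriv F w * G w := by
  have hd : ∀ x, HasDerivAt (fun x => F x * deriv G x - deriv F x * G x) 0 x := fun x => by
    refine (((hF x).hasDerivAt.mul (hG.deriv x).hasDerivAt).sub
      ((hF.deriv x).hasDerivAt.mul (hG x).hasDerivAt)).congr_deriv ?_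
    rw [hFode, hGode]
    ring
  exact is_const_of_deriv_eq_zero (fun x => (hd x).differentiableAt) (fun x => (hd x).deriv) z w

theorem eq_of_eventually_atTop_ofReal {F G : ℂ → ℂ} (hF : Differentiable ℂ F)
    (hG : Differentiable ℂ G) (h : ∀ᶠ t : ℝ in atTop, F t = G t) : F = G := by
  obtain ⟨T, hT⟩ := eventually_atTop.mp h
  have hmap : Tendsto ((↑) : ℝ → ℂ) (𝓝[Ioi T] T) (𝓝[≠] (T : ℂ)) :=
    tendsto_nhdsWithin_iff.mpr ⟨Complex.continuous_ofReal.tendsto T |>.mono_left nhdsWithin_le_nhds,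
      eventually_nhdsWithin_of_forall fun t ht => Complex.ofReal_injective.ne (ne_of_gt ht)⟩
  have hev : ∀ᶠ t : ℝ in 𝓝[Ioi T] T, F t = G t :=
    eventually_nhdsWithin_of_forall fun t ht => hT t (le_of_lt ht)
  exact (analyticOnNhd_univ_iff_differentiable.mpr hF).eq_of_frequently_eq
    (analyticOnNhd_univ_iff_differentiable.mpr hG) (hmap.frequently hev.frequently)

theorem eq_of_tendsto_mul_exp {V F G : ℂ → ℂ} {E E' : ℝ → ℂ} {p : ℝ} (hp : 0 ≤ p)
    (hF : Differentiable ℂ F) (hG : Differentiable ℂ G)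
    (hFode : ∀ z, deriv (deriv F) z = V z * F z) (hGode : ∀ z, deriv (deriv G) z = V z * G z)
    (hE : ∀ᶠ s in atTop, HasDerivAt E (E' s) s) (hE' : E' =O[atTop] fun s => s ^ p)
    (hgrow : Tendsto (fun t => Real.exp (2 * (E t).re) * t ^ (-p)) atTop atTop)
    (hFlim : Tendsto (fun t : ℝ => F t * exp (E t)) atTop (𝓝 1))
    (hGlim : Tendsto (fun t : ℝ => G t * exp (E t)) atTop (𝓝 1)) :
    F = G := by
  set W := F 0 * deriv G 0 - deriv F 0 * G 0
  set u : ℝ → ℂ := fun t => G t / F t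
  have hFne : ∀ᶠ t : ℝ in atTop, F t ≠ 0 := by
    filter_upwards [hFlim.eventually_ne one_ne_zero] with t ht hFt
    simp [hFt] at ht
  have hu : ∀ᶠ s : ℝ in atTop,
      HasDerivAt u (W * exp (2 * E s) * ((F s * exp (E s)) ^ 2)⁻¹) s := by
    filter_upwards [hFne] with s hs
    refine (((hG s).hasDerivAt.comp_ofReal).div ((hF s).hasDerivAt.comp_ofReal) hs).congr_deriv ?_
    rw [show W = F s * deriv G s - deriv F s * G s from
      wronskian_eq_of_deriv_deriv_eq hF hG hFode hGode 0 s, mul_pow, sq (exp (E s)),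
      ← Complex.exp_add, ← two_mul]
    field_simp
  have hu_lim : Tendsto u atTop (𝓝 1) := by
    refine ((hGlim.div hFlim one_ne_zero).congr fun t => ?_).trans (by rw [div_one])
    exact mul_div_mul_right _ _ (Complex.exp_ne_zero _)
  have hψ : Tendsto (fun s : ℝ => ((F s * exp (E s)) ^ 2)⁻¹) atTop (𝓝 1) := by
    simpa using (hFlim.pow 2).inv₀ (by norm_num)
  have hW : W = 0 := eq_zero_of_tendsto_of_hasDerivAt_mul_exp hp hu_lim hu hψ hE hE' hgrow
  obtain ⟨T, hT⟩ := eventually_atTop.mp hu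
  have hconst : ∀ t ≥ T, u t = u T := fun t ht =>
    constant_of_has_deriv_right_zero
      (fun x hx => (hT x hx.1).continuousAt.continuousWithinAt)
      (fun x hx => by simpa [hW] using (hT x hx.1).hasDerivWithinAt) t ⟨ht, le_rfl⟩
  have huT : u T = 1 := tendsto_nhds_unique (tendsto_const_nhds.congr'
    (eventually_atTop.mpr ⟨T, fun t ht => (hconst t ht).symm⟩)) hu_lim
  refine eq_of_eventually_atTop_ofReal hF hG ?_
  filter_upwards [eventually_ge_atTop T, hFne] with t ht hFt
  exact ((div_eq_one_iff_eq hFt).mp ((hconst t ht).trans huT)).symm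

theorem bcoef_conj (m : ℕ) (a : Fin m → ℂ) (n : ℕ) :
    bcoef m (fun j => conj (a j)) n = conj (bcoef m a n) := by
  induction n using Nat.strong_induction_on with
  | _ n ih =>
    match n with
    | 0 => simp [bcoef]
    | n + 1 =>
      rw [bcoef, bcoef, map_mul, map_sub, map_sum]
      congr 1
      · norm_num [map_ofNat]
      congr 1
      · split <;> simp
      · refine Finset.sum_congr rfl fun i _ => ?_
        have hi := Finset.mem_Ico.mp i.2
        rw [map_mul, ih i.1 (by omega), ih (n + 1 - i.1) (by omega)]

theorem rmC_conj (m : ℕ) (a : Fin m → ℂ) :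
    rmC m (fun j => conj (a j)) = conj (rmC m a) := by
  unfold rmC
  split <;> simp [bcoef_conj, map_sub, map_div₀, map_ofNat]

theorem pot_conj (m : ℕ) (a : Fin m → ℂ) (X : ℂ) :
    pot m (fun j => conj (a j)) (conj X) = conj (pot m a X) := by
  simp [pot, map_sum]

theorem om_conj (m : ℕ) : conj (om m) = (om m)⁻¹ := by
  rw [om, ← Complex.exp_conj, ← Complex.exp_neg, map_div₀]
  congr 1
  simp [map_ofNat]
  ring

theorem omPow_conj (m : ℕ) (s : ℂ) : conj (omPow m s) = omPow m (-conj s) := by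
  rw [omPow, omPow, ← Complex.exp_conj, map_mul, map_div₀]
  congr 1
  simp [map_ofNat]
  ring

theorem omAct_conj (m : ℕ) (k : ℤ) (a : Fin m → ℂ) :
    (fun j => conj (omAct m k (fun i => conj (a i)) j)) = omAct m (-k) a := by
  funext j
  simp only [omAct, map_mul, Complex.conj_conj, map_zpow₀, om_conj, inv_zpow', neg_mul]

section RayExponent

variable (m : ℕ) (a : Fin m → ℂ)

def sibuyaExp (k : ℕ) : ℝ := ((m : ℝ) + 2 - 2 * k) / 2

def sibuyaCoef (k : ℕ) : ℂ := 2 * bcoef m a k / ((m : ℂ) + 2 - 2 * (k : ℂ))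

/-- `-r_m(a) log t + S(t, a)` on the positive real axis. -/
def rayExponent (t : ℝ) : ℂ :=
  -rmC m a * Real.log t +
    ∑ k ∈ Finset.range ((m + 1) / 2 + 1), sibuyaCoef m a k * ((t ^ sibuyaExp m k : ℝ) : ℂ)

def rayExponentDeriv (t : ℝ) : ℂ :=
  -rmC m a * (t : ℂ)⁻¹ + ∑ k ∈ Finset.range ((m + 1) / 2 + 1),
    sibuyaCoef m a k * ((sibuyaExp m k * t ^ (sibuyaExp m k - 1) : ℝ) : ℂ)

theorem rayPow_mul_exp_Sfun {t : ℝ} (ht : 0 < t) :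
    rayPow t 0 (-rmC m a) * exp (Sfun m a t 0) = exp (rayExponent m a t) := by
  rw [rayPow, ← Complex.exp_add, rayExponent, Sfun]
  congr 1
  simp only [Complex.ofReal_zero, zero_mul, add_zero]
  congr 1
  refine Finset.sum_congr rfl fun k _ => ?_
  rw [rayPow, Real.rpow_def_of_pos ht, Complex.ofReal_exp, sibuyaCoef, sibuyaExp]
  push_cast
  ring_nf

theorem tendsto_mul_exp_rayExponent {Φ : ℂ → ℂ} (h : SibAsymp m a Φ) :
    Tendsto (fun t : ℝ => Φ t * exp (rayExponent m a t)) atTop (𝓝 1) := by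
  refine (h 0 (by rw [abs_zero]; positivity)).congr' ?_
  filter_upwards [eventually_gt_atTop 0] with t ht
  rw [mul_assoc, rayPow_mul_exp_Sfun m a ht, rayPt, Complex.ofReal_zero, zero_mul,
    Complex.exp_zero, mul_one]

theorem rayExponent_conj (t : ℝ) :
    rayExponent m (fun j => conj (a j)) t = conj (rayExponent m a t) := by
  simp [rayExponent, sibuyaCoef, rmC_conj, bcoef_conj, map_sum, map_ofNat]

theorem hasDerivAt_rayExponent {t : ℝ} (ht : 0 < t) :
    HasDerivAt (rayExponent m a) (rayExponentDeriv m a t) t := by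
  have hlog : HasDerivAt (fun s : ℝ => (Real.log s : ℂ)) (t : ℂ)⁻¹ t := by
    simpa using (Real.hasDerivAt_log ht.ne').ofReal_comp
  refine (hlog.const_mul _).add (HasDerivAt.fun_sum fun k _ => ?_)
  exact ((Real.hasDerivAt_rpow_const (Or.inl ht.ne')).ofReal_comp).const_mul _

theorem rayExponentDeriv_isBigO :
    rayExponentDeriv m a =O[atTop] fun t => t ^ ((m : ℝ) / 2) := by
  have hofReal : ∀ {f : ℝ → ℝ}, f =O[atTop] (fun t => t ^ ((m : ℝ) / 2)) →
      (fun t => (f t : ℂ)) =O[atTop] fun t => t ^ ((m : ℝ) / 2) := fun h =>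
    IsBigO.of_norm_left (by simpa only [Complex.norm_real] using h.norm_left)
  refine IsBigO.add (IsBigO.const_mul_left ?_ _) (IsBigO.fun_sum fun k _ => ?_)
  · have hle : (-1 : ℝ) ≤ m / 2 := by linarith [show (0 : ℝ) ≤ m / 2 by positivity]
    refine (hofReal (Real.isBigO_rpow_rpow_atTop hle)).congr_left fun t => ?_
    rw [Real.rpow_neg_one, Complex.ofReal_inv]
  · refine IsBigO.const_mul_left
      (hofReal (IsBigO.const_mul_left (Real.isBigO_rpow_rpow_atTop ?_) _)) _
    rw [sibuyaExp]
    linarith [(Nat.cast_nonneg k : (0 : ℝ) ≤ k)]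

theorem re_rayExponent (t : ℝ) :
    (rayExponent m a t).re = -(rmC m a).re * Real.log t +
      ∑ k ∈ Finset.range ((m + 1) / 2 + 1), (sibuyaCoef m a k).re * t ^ sibuyaExp m k := by
  simp [rayExponent, Complex.re_sum]

theorem sibuyaCoef_zero : sibuyaCoef m a 0 = ((2 / (m + 2) : ℝ) : ℂ) := by
  simp [sibuyaCoef, bcoef]

theorem tendsto_exp_two_mul_re_rayExponent :
    Tendsto (fun t => Real.exp (2 * (rayExponent m a t).re) * t ^ (-((m : ℝ) / 2)))
      atTop atTop := by
  set e₀ : ℝ := m / 2 + 1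
  have he₀ : 0 < e₀ := by positivity
  set main : ℝ → ℝ := fun t => 4 / (m + 2) * t ^ e₀
  set R : ℝ → ℝ := fun t => -(2 * (rmC m a).re + m / 2) * Real.log t +
      2 * ∑ k ∈ Finset.range ((m + 1) / 2), (sibuyaCoef m a (k + 1)).re * t ^ sibuyaExp m (k + 1)
  have hmain : Tendsto main atTop atTop :=
    (tendsto_rpow_atTop he₀).const_mul_atTop (by positivity)
  have hR : R =o[atTop] main := by
    refine IsLittleO.const_mul_right' (isUnit_iff_ne_zero.mpr (by positivity)) ?_
    refine ((isLittleO_log_rpow_atTop he₀).const_mul_left _).add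
      ((IsLittleO.fun_sum fun k _ => ?_).const_mul_left _)
    refine (Real.isLittleO_rpow_rpow_atTop ?_).const_mul_left _
    simp only [sibuyaExp, e₀]
    push_cast
    linarith [(k.cast_nonneg : (0 : ℝ) ≤ k)]
  refine (Real.tendsto_exp_atTop.comp
    ((hR.add_isEquivalent IsEquivalent.refl).symm.tendsto_atTop hmain)).congr' ?_
  filter_upwards [eventually_gt_atTop 0] with t ht
  rw [Function.comp_apply, Real.rpow_def_of_pos ht, ← Real.exp_add, re_rayExponent,
    Finset.sum_range_succ', sibuyaCoef_zero, Complex.ofReal_re,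
    show sibuyaExp m 0 = e₀ by simp only [sibuyaExp, e₀]; push_cast; ring]
  simp only [Pi.add_apply, R, main]
  congr 1
  ring

end RayExponent

theorem conj_apply_eq_apply_conj_of_sibuya {m : ℕ} {Φ₀ : ℂ × (Fin m → ℂ) → ℂ}
    (hent : Differentiable ℂ Φ₀)
    (hode : ∀ a : Fin m → ℂ, ∀ X : ℂ,
      -(deriv (deriv fun Y => Φ₀ (Y, a)) X) + pot m a X * Φ₀ (X, a) = 0)
    (hasym : ∀ a : Fin m → ℂ, SibAsymp m a fun X => Φ₀ (X, a)) (a : Fin m → ℂ) (X : ℂ) :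
    conj (Φ₀ (X, a)) = Φ₀ (conj X, fun j => conj (a j)) := by
  set ā : Fin m → ℂ := fun j => conj (a j)
  have hā : (fun j => conj (ā j)) = a := funext fun j => Complex.conj_conj (a j)
  have hslice : ∀ b, Differentiable ℂ fun Y => Φ₀ (Y, b) := fun b =>
    hent.comp (differentiable_id.prodMk (differentiable_const b))
  have hslice_ode : ∀ b z, deriv (deriv fun Y => Φ₀ (Y, b)) z = pot m b z * Φ₀ (z, b) :=
    fun b z => by linear_combination -hode b z
  set G : ℂ → ℂ := conj ∘ (fun Y => Φ₀ (Y, ā)) ∘ conj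
  have hG : Differentiable ℂ G := fun z =>
    differentiableAt_conj_conj_iff.mpr (hslice ā _)
  have hGode : ∀ z, deriv (deriv G) z = pot m a z * G z := fun z => by
    simp only [G, deriv_conj_conj, Function.comp_apply, hslice_ode, map_mul]
    rw [← pot_conj, hā, Complex.conj_conj]
  have hGlim : Tendsto (fun t : ℝ => G t * exp (rayExponent m a t)) atTop (𝓝 1) := by
    have h := (Complex.continuous_conj.tendsto 1).comp
      (tendsto_mul_exp_rayExponent m ā (hasym ā))
    rw [map_one] at h
    refine h.congr fun t => ?_
    simp only [G, Function.comp_apply, Complex.conj_ofReal, map_mul, ← Complex.exp_conj,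
      ← rayExponent_conj, hā]
  have hsym := eq_of_tendsto_mul_exp (by positivity : (0 : ℝ) ≤ m / 2) (hslice a) hG
    (hslice_ode a) hGode (eventually_gt_atTop 0 |>.mono fun t ht => hasDerivAt_rayExponent m a ht)
    (rayExponentDeriv_isBigO m a) (tendsto_exp_two_mul_re_rayExponent m a)
    (tendsto_mul_exp_rayExponent m a (hasym a)) hGlim
  simp [congrFun hsym X, G, ā]

theorem conj_stokes_add_stokes_conj_eq_zero {m : ℕ} {Φ₀ : ℂ × (Fin m → ℂ) → ℂ}
    {C : (Fin m → ℂ) → ℂ}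
    (hsym : ∀ (b : Fin m → ℂ) (X : ℂ), conj (Φ₀ (X, b)) = Φ₀ (conj X, fun j => conj (b j)))
    (hC : ∀ (X : ℂ) (a : Fin m → ℂ),
      omPow m ((m : ℂ) / 2 + rmC m a) * Φ₀ (om m * X, omAct m 1 a) =
        C a * Φ₀ (X, a) +
          omPow m (-((m : ℂ) / 2) - rmC m a) * Φ₀ ((om m)⁻¹ * X, omAct m (-1) a))
    {a : Fin m → ℂ} {X₀ : ℂ} (hX₀ : Φ₀ (X₀, a) ≠ 0) :
    conj (C a) + C (fun j => conj (a j)) = 0 := by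
  set ā : Fin m → ℂ := fun j => conj (a j)
  have hā : (fun j => conj (ā j)) = a := funext fun j => Complex.conj_conj (a j)
  have hr : conj (rmC m ā) = rmC m a := by rw [← rmC_conj, hā]
  have hmid : conj (Φ₀ (conj X₀, ā)) = Φ₀ (X₀, a) := by rw [hsym, Complex.conj_conj, hā]
  have hplus : conj (Φ₀ (om m * conj X₀, omAct m 1 ā)) = Φ₀ ((om m)⁻¹ * X₀, omAct m (-1) a) := by
    rw [hsym, map_mul, om_conj, Complex.conj_conj, omAct_conj]
  have hminus : conj (Φ₀ ((om m)⁻¹ * conj X₀, omAct m (-1) ā)) = Φ₀ (om m * X₀, omAct m 1 a) := by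
    rw [hsym, map_mul, map_inv₀, om_conj, inv_inv, Complex.conj_conj, omAct_conj, neg_neg]
  have hconj := congrArg conj (hC (conj X₀) ā)
  simp only [map_add, map_mul, omPow_conj, hmid, hplus, hminus, map_sub, map_neg, map_div₀, hr,
    Complex.conj_natCast, map_ofNat, neg_add', neg_sub', neg_neg, sub_neg_eq_add] at hconj
  have hsum : (C a + conj (C ā)) * Φ₀ (X₀, a) = 0 := by
    linear_combination -hC X₀ a - hconj
  have := congrArg conj ((mul_eq_zero.mp hsum).resolve_right hX₀)
  rwa [map_add, Complex.conj_conj, map_zero] at this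

theorem stmt5_general (m : ℕ)
    (Φ₀ : ℂ × (Fin m → ℂ) → ℂ)
    (hent : Differentiable ℂ Φ₀)
    (hode : ∀ a : Fin m → ℂ, ∀ X : ℂ,
      -(deriv (deriv fun Y => Φ₀ (Y, a)) X) + pot m a X * Φ₀ (X, a) = 0)
    (hasym : ∀ a : Fin m → ℂ, SibAsymp m a fun X => Φ₀ (X, a))
    (C : (Fin m → ℂ) → ℂ)
    (hC : ∀ (X : ℂ) (a : Fin m → ℂ),
      omPow m ((m : ℂ) / 2 + rmC m a) * Φ₀ (om m * X, omAct m 1 a) =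
        C a * Φ₀ (X, a) +
          omPow m (-((m : ℂ) / 2) - rmC m a) * Φ₀ ((om m)⁻¹ * X, omAct m (-1) a))
    (a : Fin m → ℂ) :
    (starRingEnd ℂ) (C a) + C (fun j => (starRingEnd ℂ) (a j)) = 0 := by
  obtain ⟨t, ht⟩ := ((tendsto_mul_exp_rayExponent m a (hasym a)).eventually_ne one_ne_zero).exists
  exact conj_stokes_add_stokes_conj_eq_zero (conj_apply_eq_apply_conj_of_sibuya hent hode hasym) hC
    (X₀ := t) (left_ne_zero_of_mul ht)

/-- the Stokes multiplier `C` of `Φ₋₁ = C(a)Φ₀ + Φ₁`, with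
`Φ₁(X,a) = ω^{-m/2-r_m(a)} Φ₀(ω⁻¹X, ω₋₁(a))` and `Φ₋₁(X,a) = ω^{m/2+r_m(a)} Φ₀(ωX, ω₁(a))`,
satisfies `conj(C(a)) + C(conj a) = 0` for every `a ∈ ℂ^m`. -/
theorem stmt5 (m : ℕ) (hm : 1 ≤ m)
    (Φ₀ : ℂ × (Fin m → ℂ) → ℂ)
    (hent : Differentiable ℂ Φ₀)
    (hode : ∀ a : Fin m → ℂ, ∀ X : ℂ,
      -(deriv (deriv fun Y => Φ₀ (Y, a)) X) + pot m a X * Φ₀ (X, a) = 0)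
    (hasym : ∀ a : Fin m → ℂ, SibAsymp m a fun X => Φ₀ (X, a))
    (C : (Fin m → ℂ) → ℂ)
    (hC : ∀ (X : ℂ) (a : Fin m → ℂ),
      omPow m ((m : ℂ) / 2 + rmC m a) * Φ₀ (om m * X, omAct m 1 a) =
        C a * Φ₀ (X, a) +
          omPow m (-((m : ℂ) / 2) - rmC m a) * Φ₀ ((om m)⁻¹ * X, omAct m (-1) a))
    (a : Fin m → ℂ) :
    (starRingEnd ℂ) (C a) + C (fun j => (starRingEnd ℂ) (a j)) = 0 :=
  stmt5_general m Φ₀ hent hode hasym C hC a
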